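/- arXiv:2211.14584 — 3 statements merged into one kernel-verified Lean document; each statement's English description precedes it below -/
import Mathlib

section
/- Let β be the unique root in (1,2) of x^4 − x^2 − x − 1 = 0 and let α = 1 − β²/(β+1). Then the orbit of 0 under T_{β,α} returns to 0 after exactly four steps: T_{β,α}(0) = α, T_{β,α}²(0) = βα + α, T_{β,α}³(0) = β²α + βα + α, and T_{β,α}⁴(0) = β³α + β²α + βα + α − 1 = 0. -/
/-- The intermediate β-transformation `x ↦ βx + α (mod 1)`. -/
noncomputable def Tba (β α : ℝ) : ℝ → ℝ := fun x => Int.fract (β * x + α)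

/-- For `β` the root in `(1,2)` of `x⁴ - x² - x - 1 = 0` and `α = 1 - β²/(β+1)`,
the orbit of `0` under `T_{β,α}` returns to `0` after exactly four steps, with
`T(0) = α`, `T²(0) = βα + α`, `T³(0) = β²α + βα + α`, and
`T⁴(0) = β³α + β²α + βα + α - 1 = 0`. -/
theorem stmt_4 (β α : ℝ) (hβ : β ∈ Set.Ioo (1:ℝ) 2)
    (hroot : β^4 - β^2 - β - 1 = 0) (hα : α = 1 - β^2 / (β + 1)) :
    Tba β α 0 = α ∧
    (Tba β α)^[2] 0 = β * α + α ∧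
    (Tba β α)^[3] 0 = β * (β * α + α) + α ∧
    β * (β * (β * α + α) + α) + α - 1 = 0 ∧
    (Tba β α)^[4] 0 = 0 := by
  obtain ⟨hβ1, hβ2⟩ := hβ
  have hb1 : (0:ℝ) < β + 1 := by linarith
  have hαeq : α * (β + 1) = β + 1 - β ^ 2 := by
    rw [hα]; field_simp
  have hα0 : 0 ≤ α := by nlinarith [sq_nonneg (β^2 - β - 1), sq_nonneg β]
  have hα1 : α < 1 := by nlinarith
  have h1 : Tba β α 0 = α := by
    unfold Tba
    rw [mul_zero, zero_add, Int.fract_eq_self.2 ⟨hα0, hα1⟩]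
  have hT2lb : 0 ≤ β * α + α := by nlinarith
  have hT2ub : β * α + α < 1 := by nlinarith
  have h2 : Tba β α α = β * α + α := by
    unfold Tba
    rw [Int.fract_eq_self.2 ⟨hT2lb, hT2ub⟩]
  have hT3lb : 0 ≤ β * (β * α + α) + α := by nlinarith
  have hT3ub : β * (β * α + α) + α < 1 := by nlinarith [sq_nonneg (β^2 - β - 1), sq_nonneg (β - 1), sq_nonneg β]
  have h3 : Tba β α (β * α + α) = β * (β * α + α) + α := by
    unfold Tba
    rw [Int.fract_eq_self.2 ⟨hT3lb, hT3ub⟩]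
  have h4 : β * (β * (β * α + α) + α) + α - 1 = 0 := by
    nlinarith [hαeq, hroot, mul_self_nonneg β]
  have h5 : Tba β α (β * (β * α + α) + α) = 0 := by
    unfold Tba
    have : β * (β * (β * α + α) + α) + α = 1 := by linarith
    rw [this, Int.fract_one]
  refine ⟨h1, ?_, ?_, h4, ?_⟩
  · rw [show (2:ℕ) = 1+1 from rfl]
    simp only [Function.iterate_add_apply, Function.iterate_one]
    rw [h1, h2]
  · rw [show (3:ℕ) = 1+1+1 from rfl]
    simp only [Function.iterate_add_apply, Function.iterate_one]
    rw [h1, h2, h3]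
  · rw [show (4:ℕ) = 1+1+1+1 from rfl]
    simp only [Function.iterate_add_apply, Function.iterate_one]
    rw [h1, h2, h3, h5]
end

section
/- Call a finite nonempty binary word s ∈ {0,1}* Lyndon if s^∞ ≺ σ^n(s^∞) for all n ∈ ℕ with n not divisible by |s|, where s^∞ is the periodic infinite word with period block s. If s is Lyndon and x ∈ {0,1}^ℕ satisfies s 0^∞ ⪯ x ≺ s^∞ (lexicographically), then there exists n ≥ 1 with σ^n(x) ≺ x; that is, x fails the condition 'x ⪯ σ^n(x) for all n ≥ 0'. -/
/-- The left shift on one-sided sequences. -/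
def shiftSeq (ω : ℕ → ℕ) : ℕ → ℕ := fun n => ω (n + 1)

/-- Strict lexicographic order on sequences. -/
def lexLT (x y : ℕ → ℕ) : Prop := ∃ n, (∀ k < n, x k = y k) ∧ x n < y n

/-- Non-strict lexicographic order on sequences. -/
def lexLE (x y : ℕ → ℕ) : Prop := lexLT x y ∨ x = y

/-- The periodic infinite word `s^∞` with period block `s`. -/
def perWord (s : List ℕ) : ℕ → ℕ := fun n => s.getD (n % s.length) 0

/-- The infinite word `s0^∞`: the block `s` followed by infinitely many zeros. -/
def padWord (s : List ℕ) : ℕ → ℕ := fun n => s.getD n 0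

/-- A finite nonempty binary word `s` is Lyndon if `s^∞ ≺ σ^n(s^∞)` for every `n`
not divisible by `|s|`. -/
def IsLyndonWord (s : List ℕ) : Prop :=
  s ≠ [] ∧ ∀ n : ℕ, ¬ (s.length ∣ n) → lexLT (perWord s) (shiftSeq^[n] (perWord s))

lemma shift_iter_apply (x : ℕ → ℕ) (n k : ℕ) : shiftSeq^[n] x k = x (k + n) := by
  induction n generalizing x k with
  | zero => simp
  | succ n ih =>
    rw [Function.iterate_succ_apply, ih]
    rfl

lemma lexLT_asymm {x y : ℕ → ℕ} (h : lexLT x y) (h' : lexLE y x) : False := by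
  obtain ⟨n, hn, hlt⟩ := h
  rcases h' with ⟨n', hn', hlt'⟩ | rfl
  · rcases lt_trichotomy n n' with hc | rfl | hc
    · have := hn' n hc; omega
    · omega
    · have := hn n' hc; omega
  · omega

/-- If `s` is a Lyndon word and `s0^∞ ⪯ x ≺ s^∞`, then some shift of `x` is
lexicographically strictly smaller than `x`. -/
theorem stmt_7 (s : List ℕ) (hs : ∀ a ∈ s, a ≤ 1) (hL : IsLyndonWord s)
    (x : ℕ → ℕ) (hx : ∀ k, x k ≤ 1)
    (h1 : lexLE (padWord s) x) (h2 : lexLT x (perWord s)) :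
    ∃ n : ℕ, 1 ≤ n ∧ lexLT (shiftSeq^[n] x) x := by
  obtain ⟨hne, -⟩ := hL
  have hLpos : 0 < s.length := List.length_pos_iff.mpr hne
  obtain ⟨m, hmeq, hmlt⟩ := h2
  -- first disagreement with s^∞ is at index ≥ |s|
  have hLm : s.length ≤ m := by
    by_contra hcon
    push_neg at hcon
    refine lexLT_asymm ?_ h1
    refine ⟨m, fun k hk => ?_, ?_⟩
    · have := hmeq k hk
      simpa [padWord, perWord, Nat.mod_eq_of_lt (hk.trans hcon)] using this
    · simpa [padWord, perWord, Nat.mod_eq_of_lt hcon] using hmlt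
  set L := s.length with hLdef
  set q := m / L with hq
  set r := m % L with hrdef
  have hn : L * q + r = m := Nat.div_add_mod m L
  have hrL : r < L := Nat.mod_lt _ hLpos
  have hq1 : 1 ≤ q := (Nat.one_le_div_iff hLpos).mpr hLm
  have hnL : L ≤ L * q := Nat.le_mul_of_pos_right _ hq1
  refine ⟨L * q, by omega, r, fun k hk => ?_, ?_⟩
  · have hk1 : k + L * q < m := by omega
    have hk2 : k < m := by omega
    have e1 := hmeq _ hk1
    have e2 := hmeq _ hk2
    rw [shift_iter_apply, e1, e2]
    unfold perWord
    rw [Nat.add_mul_mod_self_left]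
  · have hrm : r < m := by omega
    have e2 := hmeq _ hrm
    rw [shift_iter_apply, e2]
    have : r + L * q = m := by omega
    rw [this]
    have : perWord s m = perWord s r := by
      unfold perWord
      rw [← hn, Nat.add_comm, Nat.add_mul_mod_self_left]
    omega
end

section
/- Let (β,α) ∈ Δ and t ∈ [0,1). If t ∉ E⁺_{β,α} (i.e. there exists n ≥ 0 with T^n_{β,α}(t) ∈ [0,t)), then there exists ε > 0 such that K⁺_{β,α}(s) = K⁺_{β,α}(t) for all s ∈ (t, t+ε), where K⁺_{β,α}(r) = { x ∈ [0,1) : T^n_{β,α}(x) ∉ [0, r) for all n ≥ 0 }. -/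
/-- The survivor set of the hole `[0, r)`. -/
noncomputable def survivorSet (β α r : ℝ) : Set ℝ :=
  {x | x ∈ Set.Ico (0:ℝ) 1 ∧ ∀ n : ℕ, (Tba β α)^[n] x ∉ Set.Ico 0 r}

lemma iter_mem_Ico (β α t : ℝ) (ht : t ∈ Set.Ico (0:ℝ) 1) (k : ℕ) :
    (Tba β α)^[k] t ∈ Set.Ico (0:ℝ) 1 := by
  cases k with
  | zero => simpa
  | succ k =>
    rw [Function.iterate_succ_apply']
    exact ⟨Int.fract_nonneg _, Int.fract_lt_one _⟩

lemma iter_add_small (β α t δ : ℝ) (hβ : 1 < β) (hδ : 0 ≤ δ) (N : ℕ)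
    (h : ∀ k ≤ N, (Tba β α)^[k] t + β ^ k * δ < 1) :
    ∀ k ≤ N, (Tba β α)^[k] (t + δ) = (Tba β α)^[k] t + β ^ k * δ := by
  intro k hk
  induction k with
  | zero => simp
  | succ k ih =>
    have hk' : k ≤ N := Nat.le_of_succ_le hk
    rw [Function.iterate_succ_apply', Function.iterate_succ_apply', ih hk']
    show Int.fract (β * ((Tba β α)^[k] t + β ^ k * δ) + α) = _
    have hrw : β * ((Tba β α)^[k] t + β ^ k * δ) + α
        = (β * (Tba β α)^[k] t + α) + β ^ (k+1) * δ := by ring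
    rw [hrw]
    set a := β * (Tba β α)^[k] t + α with ha
    have hfa : (Tba β α)^[k+1] t = Int.fract a := by
      rw [Function.iterate_succ_apply']; rfl
    have h1 : 0 ≤ Int.fract a + β ^ (k+1) * δ := by
      have := Int.fract_nonneg a
      have : 0 ≤ β ^ (k+1) * δ := by positivity
      linarith [Int.fract_nonneg a]
    have h2 : Int.fract a + β ^ (k+1) * δ < 1 := by
      have := h (k+1) hk
      rwa [hfa] at this
    have hsplit : a + β ^ (k+1) * δ = (⌊a⌋ : ℝ) + (Int.fract a + β ^ (k+1) * δ) := by
      rw [← add_assoc, Int.floor_add_fract]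
    rw [hsplit, Int.fract_intCast_add, Int.fract_eq_self.mpr ⟨h1, h2⟩]
    show Int.fract a + β ^ (k+1) * δ = Tba β α ((Tba β α)^[k] t) + β ^ (k+1) * δ
    rw [← hfa, Function.iterate_succ_apply']

/-- If `t ∈ [0,1)` is not in the bifurcation set `E⁺_{β,α}` (i.e. some iterate of `t` falls
into `[0,t)`), then the survivor sets `K⁺_{β,α}(s)` are constant for `s` slightly above `t`. -/
theorem stmt_11 (β α t : ℝ) (hβ : β ∈ Set.Ioo (1:ℝ) 2) (hα : α ∈ Set.Icc (0:ℝ) (2 - β))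
    (ht : t ∈ Set.Ico (0:ℝ) 1)
    (hesc : ∃ n : ℕ, (Tba β α)^[n] t ∈ Set.Ico 0 t) :
    ∃ ε > 0, ∀ s ∈ Set.Ioo t (t + ε), survivorSet β α s = survivorSet β α t := by
  obtain ⟨N, hN0, hNt⟩ := hesc
  have hβ1 : (1:ℝ) < β := hβ.1
  have hβpow : (0:ℝ) < β ^ N := by positivity
  set M : ℝ := (Finset.range (N+1)).sup' (Finset.nonempty_range_iff.mpr (Nat.succ_ne_zero N)) (fun k => (Tba β α)^[k] t) with hM
  have hMlt : M < 1 := by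
    rw [hM, Finset.sup'_lt_iff]
    intro k _
    exact (iter_mem_Ico β α t ht k).2
  have hMle : ∀ k ≤ N, (Tba β α)^[k] t ≤ M := by
    intro k hk
    rw [hM]
    exact Finset.le_sup' (fun k => (Tba β α)^[k] t) (Finset.mem_range.mpr (Nat.lt_succ_of_le hk))
  set ε : ℝ := min ((1 - M) / β ^ N) ((t - (Tba β α)^[N] t) / β ^ N) with hε
  have hεpos : 0 < ε := by
    apply lt_min
    · apply div_pos (by linarith) hβpow
    · apply div_pos (by linarith) hβpow
  refine ⟨ε, hεpos, fun s hs => ?_⟩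
  apply Set.eq_of_subset_of_subset
  · -- survivorSet s ⊆ survivorSet t
    intro x ⟨hx1, hx2⟩
    refine ⟨hx1, fun n hn => hx2 n ⟨hn.1, lt_trans hn.2 hs.1⟩⟩
  · -- survivorSet t ⊆ survivorSet s
    intro x ⟨hx1, hx2⟩
    refine ⟨hx1, fun n hn => ?_⟩
    have hge : t ≤ (Tba β α)^[n] x := by
      by_contra hlt
      exact hx2 n ⟨hn.1, lt_of_not_ge hlt⟩
    set δ : ℝ := (Tba β α)^[n] x - t with hδdef
    have hδ0 : 0 ≤ δ := by linarith
    have hδε : δ < ε := by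
      have := hn.2
      have := hs.2
      simp only [hδdef]
      linarith
    have hβNδ1 : β ^ N * δ < 1 - M := by
      have : β ^ N * δ < β ^ N * ε := by
        exact mul_lt_mul_of_pos_left hδε hβpow
      have h2 : β ^ N * ε ≤ β ^ N * ((1 - M) / β ^ N) :=
        mul_le_mul_of_nonneg_left (min_le_left _ _) (le_of_lt hβpow)
      rw [mul_div_cancel₀ _ (ne_of_gt hβpow)] at h2
      linarith
    have hβNδ2 : β ^ N * δ < t - (Tba β α)^[N] t := by
      have h1 : β ^ N * δ < β ^ N * ε := mul_lt_mul_of_pos_left hδε hβpow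
      have h2 : β ^ N * ε ≤ β ^ N * ((t - (Tba β α)^[N] t) / β ^ N) :=
        mul_le_mul_of_nonneg_left (min_le_right _ _) (le_of_lt hβpow)
      rw [mul_div_cancel₀ _ (ne_of_gt hβpow)] at h2
      linarith
    have hkey : ∀ k ≤ N, (Tba β α)^[k] t + β ^ k * δ < 1 := by
      intro k hk
      have hpow : β ^ k ≤ β ^ N := pow_le_pow_right₀ (le_of_lt hβ1) hk
      have : β ^ k * δ ≤ β ^ N * δ := mul_le_mul_of_nonneg_right hpow hδ0
      have := hMle k hk
      linarith
    have heq := iter_add_small β α t δ hβ1 hδ0 N hkey N le_rfl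
    have hiter : (Tba β α)^[N + n] x = (Tba β α)^[N] ((Tba β α)^[n] x) :=
      Function.iterate_add_apply _ _ _ _
    have htδ : (Tba β α)^[n] x = t + δ := by simp [hδdef]
    apply hx2 (N + n)
    rw [hiter, htδ, heq]
    constructor
    · have := (iter_mem_Ico β α t ht N).1
      have : 0 ≤ β ^ N * δ := by positivity
      linarith [(iter_mem_Ico β α t ht N).1]
    · linarith
end
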